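/- arXiv:2304.14782 — 4 statements merged into one kernel-verified Lean document; each statement's English description precedes it below -/
import Mathlib

section
/- Let G be a connected graph on n ≥ 2 vertices and define f(X) = 3^{n−2} − Σ_{C ∈ 𝒞*(X)} 3^{|C|−2}, where 𝒞*(X) is the set of connected components of G − X of size at least 2. Then f is monotone: if X ⊆ Y ⊆ V, then f(X) ≤ f(Y). -/
attribute [local instance] Classical.propDecidable

/-- `C` is the vertex set of a connected component of `G − X`. -/
def IsCompOf {V : Type*} (G : SimpleGraph V) (X C : Finset V) : Prop :=
  C.Nonempty ∧ Disjoint C X ∧ (G.induce (C : Set V)).Connected ∧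
    ∀ a ∈ C, ∀ b : V, b ∉ X → G.Adj a b → b ∈ C

/-- The Devadoss rank function `f(X) = 3^{n-2} - Σ_{C ∈ 𝒞*(X)} 3^{|C|-2}`. -/
noncomputable def devf {V : Type*} [Fintype V] (G : SimpleGraph V) (X : Finset V) : ℝ :=
  3 ^ (Fintype.card V - 2) -
    ∑ C ∈ Finset.univ.filter (fun C : Finset V => IsCompOf G X C ∧ 2 ≤ C.card),
      (3 : ℝ) ^ (C.card - 2)

/-! Every component of `G − Y` with at least two vertices lies inside a component of `G − X`
with at least two vertices, and the components of `G − Y` inside one component `C` of `G − X`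
are disjoint. So the claim reduces to the superadditivity `3^(a-2) + 3^(b-2) ≤ 3^(a+b-2)` for
`a, b ≥ 2`, applied within each `C`. -/

open Finset

section PowSubTwo

variable {ι α : Type*} {r : ℝ}

lemma pow_sub_two_add_pow_sub_two_le (hr : 2 ≤ r) {a b : ℕ} (ha : 2 ≤ a) (hb : 2 ≤ b) :
    r ^ (a - 2) + r ^ (b - 2) ≤ r ^ (a + b - 2) := by
  have hx : 1 ≤ r ^ (a - 2) := one_le_pow₀ (by linarith)
  have hy : 1 ≤ r ^ (b - 2) := one_le_pow₀ (by linarith)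
  rw [show a + b - 2 = (a - 2) + (b - 2) + 2 by omega, pow_add, pow_add]
  calc r ^ (a - 2) + r ^ (b - 2)
      ≤ r ^ (a - 2) * r ^ (b - 2) * 2 := by nlinarith
    _ ≤ r ^ (a - 2) * r ^ (b - 2) * r ^ 2 := by gcongr; nlinarith

lemma sum_pow_sub_two_le (hr : 2 ≤ r) {s : Finset ι} {f : ι → ℕ} (hf : ∀ i ∈ s, 2 ≤ f i) :
    ∑ i ∈ s, r ^ (f i - 2) ≤ r ^ (∑ i ∈ s, f i - 2) := by
  induction s using Finset.induction_on with
  | empty => simp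
  | @insert i s hi ih =>
    rw [sum_insert hi, sum_insert hi]
    obtain rfl | ⟨j, hj⟩ := s.eq_empty_or_nonempty
    · simp
    have hfs : 2 ≤ ∑ k ∈ s, f k :=
      (hf j (mem_insert_of_mem hj)).trans (single_le_sum (fun _ _ ↦ Nat.zero_le _) hj)
    calc r ^ (f i - 2) + ∑ k ∈ s, r ^ (f k - 2)
        ≤ r ^ (f i - 2) + r ^ (∑ k ∈ s, f k - 2) :=
          add_le_add_right (ih fun k hk ↦ hf k (mem_insert_of_mem hk)) _
      _ ≤ r ^ (f i + ∑ k ∈ s, f k - 2) :=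
          pow_sub_two_add_pow_sub_two_le hr (hf i (mem_insert_self i s)) hfs

lemma sum_pow_card_sub_two_le_of_subset (hr : 2 ≤ r) {𝒟 : Finset (Finset α)} {C : Finset α}
    (hcard : ∀ D ∈ 𝒟, 2 ≤ #D) (hdisj : (𝒟 : Set (Finset α)).PairwiseDisjoint id)
    (hsub : ∀ D ∈ 𝒟, D ⊆ C) :
    ∑ D ∈ 𝒟, r ^ (#D - 2) ≤ r ^ (#C - 2) := by
  calc ∑ D ∈ 𝒟, r ^ (#D - 2)
      ≤ r ^ (∑ D ∈ 𝒟, #D - 2) := sum_pow_sub_two_le hr hcard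
    _ = r ^ (#(𝒟.biUnion id) - 2) := by rw [card_biUnion hdisj]; rfl
    _ ≤ r ^ (#C - 2) := by
        gcongr
        · linarith
        · exact biUnion_subset.2 hsub

lemma sum_pow_card_sub_two_le_of_refines (hr : 2 ≤ r) {𝒮 𝒯 : Finset (Finset α)}
    (hcard : ∀ D ∈ 𝒮, 2 ≤ #D) (hdisj : (𝒮 : Set (Finset α)).PairwiseDisjoint id)
    (hsub : ∀ D ∈ 𝒮, ∃ C ∈ 𝒯, D ⊆ C) :
    ∑ D ∈ 𝒮, r ^ (#D - 2) ≤ ∑ C ∈ 𝒯, r ^ (#C - 2) := by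
  choose! parent hparent hsub_parent using hsub
  rw [← sum_fiberwise_of_maps_to hparent]
  refine sum_le_sum fun C _ ↦ sum_pow_card_sub_two_le_of_subset hr ?_ ?_ ?_
  · exact fun D hD ↦ hcard D (mem_filter.1 hD).1
  · exact hdisj.subset (coe_subset.2 (filter_subset _ _))
  · intro D hD
    obtain ⟨hDS, rfl⟩ := mem_filter.1 hD
    exact hsub_parent D hDS

end PowSubTwo

section Components

variable {V : Type*} {G : SimpleGraph V} {X Y C D : Finset V} {v w : V}

/-- `G − X`, kept on the whole vertex type: the vertices of `X` become isolated. -/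
def isolateVerts (G : SimpleGraph V) (X : Finset V) : SimpleGraph V where
  Adj a b := G.Adj a b ∧ a ∉ X ∧ b ∉ X
  symm := ⟨fun _ _ h ↦ ⟨h.1.symm, h.2.2, h.2.1⟩⟩
  loopless := ⟨fun _ h ↦ G.loopless.irrefl _ h.1⟩

lemma isolateVerts_anti (hXY : X ⊆ Y) : isolateVerts G Y ≤ isolateVerts G X :=
  fun _ _ h ↦ ⟨h.1, fun ha ↦ h.2.1 (hXY ha), fun hb ↦ h.2.2 (hXY hb)⟩

lemma notMem_of_reachable_isolateVerts (hv : v ∉ X) (h : (isolateVerts G X).Reachable v w) :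
    w ∉ X := by
  obtain ⟨p⟩ := h.symm
  cases p with
  | nil => exact hv
  | cons hadj _ => exact hadj.2.1

namespace IsCompOf

lemma mem_of_reachable (hC : IsCompOf G X C) (hv : v ∈ C)
    (h : (isolateVerts G X).Reachable v w) : w ∈ C := by
  obtain ⟨p⟩ := h
  induction p with
  | nil => exact hv
  | cons hadj _ ih => exact ih (hC.2.2.2 _ hv _ hadj.2.2 hadj.1)

lemma reachable (hC : IsCompOf G X C) (hv : v ∈ C) (hw : w ∈ C) :
    (isolateVerts G X).Reachable v w :=
  have hCX (u : (C : Set V)) : (u : V) ∉ X := disjoint_left.1 hC.2.1 u.2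
  let inclusion : G.induce C →g isolateVerts G X := ⟨Subtype.val, fun h ↦ ⟨h, hCX _, hCX _⟩⟩
  (hC.2.2.1.preconnected ⟨v, hv⟩ ⟨w, hw⟩).map inclusion

lemma subset_of_mem (hXY : X ⊆ Y) (hD : IsCompOf G Y D) (hC : IsCompOf G X C)
    (hvD : v ∈ D) (hvC : v ∈ C) : D ⊆ C :=
  fun _ hw ↦ hC.mem_of_reachable hvC ((hD.reachable hvD hw).mono (isolateVerts_anti hXY))

lemma pairwiseDisjoint : {C | IsCompOf G X C}.PairwiseDisjoint id := by
  intro C hC D hD hne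
  refine disjoint_left.2 fun v hvC hvD ↦ hne ?_
  exact (hC.subset_of_mem subset_rfl hD hvC hvD).antisymm (hD.subset_of_mem subset_rfl hC hvD hvC)

end IsCompOf

lemma exists_isCompOf_mem [Finite V] (hv : v ∉ X) : ∃ C, IsCompOf G X C ∧ v ∈ C := by
  set c := (isolateVerts G X).connectedComponentMk v
  have hc : c.supp.Finite := Set.toFinite _
  have mem_iff {w : V} : w ∈ hc.toFinset ↔ (isolateVerts G X).Reachable v w := by
    rw [Set.Finite.mem_toFinset, SimpleGraph.ConnectedComponent.mem_supp_iff, eq_comm,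
      SimpleGraph.ConnectedComponent.eq]
  have hdisj : Disjoint hc.toFinset X :=
    disjoint_left.2 fun _ hw ↦ notMem_of_reachable_isolateVerts hv (mem_iff.1 hw)
  refine ⟨hc.toFinset, ⟨⟨v, mem_iff.2 .rfl⟩, hdisj, ?_, ?_⟩, mem_iff.2 .rfl⟩
  · rw [Set.Finite.coe_toFinset]
    exact c.maximal_connected_induce_supp.prop.mono
      fun _ _ (h : (isolateVerts G X).Adj _ _) ↦ h.1
  · intro a ha b hb hab
    have hab' : (isolateVerts G X).Adj a b := ⟨hab, disjoint_left.1 hdisj ha, hb⟩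
    exact mem_iff.2 ((mem_iff.1 ha).trans hab'.reachable)

end Components

theorem stmt_4_general {V : Type*} [Fintype V] (G : SimpleGraph V)
    (X Y : Finset V) (hXY : X ⊆ Y) :
    devf G X ≤ devf G Y := by
  refine sub_le_sub_left (sum_pow_card_sub_two_le_of_refines (by norm_num) ?_ ?_ ?_) _
  · exact fun D hD ↦ (mem_filter.1 hD).2.2
  · exact IsCompOf.pairwiseDisjoint.subset fun D hD ↦ (mem_filter.1 hD).2.1
  · intro D hD
    obtain ⟨-, hDY, hDcard⟩ := mem_filter.1 hD
    obtain ⟨v, hvD⟩ := hDY.1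
    obtain ⟨C, hCX, hvC⟩ :=
      exists_isCompOf_mem (G := G) fun hvX ↦ disjoint_left.1 hDY.2.1 hvD (hXY hvX)
    have hDC := hDY.subset_of_mem hXY hCX hvD hvC
    exact ⟨C, mem_filter.2 ⟨mem_univ _, hCX, hDcard.trans (card_le_card hDC)⟩, hDC⟩

theorem stmt_4 {V : Type*} [Fintype V] (G : SimpleGraph V) (hG : G.Connected)
    (hn : 2 ≤ Fintype.card V) (X Y : Finset V) (hXY : X ⊆ Y) :
    devf G X ≤ devf G Y :=
  stmt_4_general G X Y hXY
end

section
/- Let G be a connected graph on n ≥ 2 vertices with the function f(X) = 3^{n−2} − Σ_{C ∈ 𝒞*(X)} 3^{|C|−2}. For vertices u, v in distinct connected components of G − X (with u, v ∉ X), the submodular inequality holds with equality: f(X ∪ {u}) + f(X ∪ {v}) = f(X ∪ {u,v}) + f(X). -/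
attribute [local instance] Classical.propDecidable

section Aux

variable {V : Type*} {G : SimpleGraph V} {X X' Y C D C₁ C₂ : Finset V} {u v : V}

lemma walk_mem (hD : IsCompOf G X' D) {S : Set V} (hS : ∀ a ∈ S, a ∉ X')
    {x y : S} (w : (G.induce S).Walk x y) (hx : (x : V) ∈ D) : (y : V) ∈ D := by
  induction w with
  | nil => exact hx
  | @cons x m y h p ih =>
    exact ih (hD.2.2.2 _ hx _ (hS _ m.2) h)

lemma comp_subset (hC : IsCompOf G X C) (hD : IsCompOf G X' D) (hdis : Disjoint C X')
    {c : V} (hc : c ∈ C) (hcD : c ∈ D) : C ⊆ D := by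
  intro a ha
  obtain ⟨w⟩ := hC.2.2.1.preconnected ⟨c, by simpa using hc⟩ ⟨a, by simpa using ha⟩
  exact walk_mem hD (fun b hb => Finset.disjoint_left.1 hdis (by simpa using hb)) w hcD

lemma comp_eq (hC : IsCompOf G X C) (hD : IsCompOf G X D) {c : V}
    (hc : c ∈ C) (hcD : c ∈ D) : C = D :=
  le_antisymm (comp_subset hC hD hC.2.1 hc hcD) (comp_subset hD hC hD.2.1 hcD hc)

lemma compOf_insert_of_ne (hC₁ : IsCompOf G X C₁) (hu : u ∈ C₁) (hC : IsCompOf G X C)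
    (hne : C ≠ C₁) : IsCompOf G (insert u X) C := by
  have huC : u ∉ C := fun h => hne (comp_eq hC hC₁ h hu)
  refine ⟨hC.1, ?_, hC.2.2.1, fun a ha b hb hab =>
    hC.2.2.2 a ha b (fun h => hb (Finset.mem_insert_of_mem h)) hab⟩
  rw [Finset.disjoint_insert_right]
  exact ⟨huC, hC.2.1⟩

lemma compOf_insert_cases (hC₁ : IsCompOf G X C₁) (hu : u ∈ C₁)
    (hD : IsCompOf G (insert u X) D) : D ⊆ C₁ ∨ (IsCompOf G X D ∧ D ≠ C₁) := by
  have hDX : Disjoint D X := hD.2.1.mono_right (Finset.subset_insert u X)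
  by_cases h : ∃ d ∈ D, d ∈ C₁
  · obtain ⟨d, hd, hd1⟩ := h
    exact Or.inl (comp_subset hD hC₁ hDX hd hd1)
  · push_neg at h
    refine Or.inr ⟨⟨hD.1, hDX, hD.2.2.1, ?_⟩, fun he => h u (he ▸ hu) hu⟩
    intro a ha b hb hab
    by_cases hbu : b = u
    · subst hbu
      exact absurd (hC₁.2.2.2 b hu a (Finset.disjoint_left.1 hDX ha) hab.symm) (h a ha)
    · exact hD.2.2.2 a ha b (by simp [Finset.mem_insert, hbu, hb]) hab

lemma compOf_irrel (hC₁ : IsCompOf G X C₁) (hC₂ : IsCompOf G X C₂) (hne : C₁ ≠ C₂)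
    (hv : v ∈ C₂) (hDC : D ⊆ C₁) (_hXY : X ⊆ Y) :
    IsCompOf G Y D ↔ IsCompOf G (insert v Y) D := by
  have hvD : v ∉ D := fun h => hne (comp_eq hC₁ hC₂ (hDC h) hv)
  constructor
  · intro hD
    refine ⟨hD.1, ?_, hD.2.2.1, fun a ha b hb hab =>
      hD.2.2.2 a ha b (fun h => hb (Finset.mem_insert_of_mem h)) hab⟩
    rw [Finset.disjoint_insert_right]
    exact ⟨hvD, hD.2.1⟩
  · intro hD
    refine ⟨hD.1, hD.2.1.mono_right (Finset.subset_insert v Y), hD.2.2.1, ?_⟩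
    intro a ha b hb hab
    by_cases hbv : b = v
    · exfalso; subst hbv
      have haX : a ∉ X := Finset.disjoint_left.1 hC₁.2.1 (hDC ha)
      exact hne (comp_eq hC₁ hC₂ (hDC ha) (hC₂.2.2.2 b hv a haX hab.symm))
    · exact hD.2.2.2 a ha b (by simp [Finset.mem_insert, hbv, hb]) hab

end Aux

theorem stmt_7 {V : Type*} [Fintype V] (G : SimpleGraph V) (hG : G.Connected)
    (hn : 2 ≤ Fintype.card V) (X : Finset V) (u v : V)
    (hu : u ∉ X) (hv : v ∉ X) (huv : u ≠ v)
    (hdist : ∃ C₁ C₂ : Finset V, IsCompOf G X C₁ ∧ IsCompOf G X C₂ ∧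
      u ∈ C₁ ∧ v ∈ C₂ ∧ C₁ ≠ C₂) :
    devf G (insert u X) + devf G (insert v X) = devf G (insert u (insert v X)) + devf G X := by
  obtain ⟨C₁, C₂, hC₁, hC₂, huC₁, hvC₂, hC12⟩ := hdist
  have hdisj : Disjoint C₁ C₂ := by
    rw [Finset.disjoint_left]
    intro a ha ha2
    exact hC12 (comp_eq hC₁ hC₂ ha ha2)
  have hC₁' : IsCompOf G (insert v X) C₁ := compOf_insert_of_ne hC₂ hvC₂ hC₁ hC12
  have hkey : ∀ C : Finset V,
      (if IsCompOf G (insert u X) C ∧ 2 ≤ C.card then (3:ℝ) ^ (C.card - 2) else 0) +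
      (if IsCompOf G (insert v X) C ∧ 2 ≤ C.card then (3:ℝ) ^ (C.card - 2) else 0) =
      (if IsCompOf G (insert u (insert v X)) C ∧ 2 ≤ C.card then (3:ℝ) ^ (C.card - 2) else 0) +
      (if IsCompOf G X C ∧ 2 ≤ C.card then (3:ℝ) ^ (C.card - 2) else 0) := by
    intro C
    by_cases hb : IsCompOf G X C
    · by_cases h1 : C = C₁
      · subst h1
        have hna : ¬ IsCompOf G (insert u (insert v X)) C := fun h =>
          (Finset.disjoint_left.1 h.2.1 huC₁) (Finset.mem_insert_self u _)
        have hnu : ¬ IsCompOf G (insert u X) C := fun h =>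
          (Finset.disjoint_left.1 h.2.1 huC₁) (Finset.mem_insert_self u _)
        have hpv : IsCompOf G (insert v X) C := compOf_insert_of_ne hC₂ hvC₂ hb hC12
        simp [hna, hnu, hpv, hb]
      · by_cases h2 : C = C₂
        · subst h2
          have hna : ¬ IsCompOf G (insert u (insert v X)) C := fun h =>
            (Finset.disjoint_left.1 h.2.1 hvC₂)
              (Finset.mem_insert_of_mem (Finset.mem_insert_self v _))
          have hnv : ¬ IsCompOf G (insert v X) C := fun h =>
            (Finset.disjoint_left.1 h.2.1 hvC₂) (Finset.mem_insert_self v _)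
          have hpu : IsCompOf G (insert u X) C :=
            compOf_insert_of_ne hC₁ huC₁ hb (Ne.symm hC12)
          simp [hna, hnv, hpu, hb]
        · have hpu : IsCompOf G (insert u X) C := compOf_insert_of_ne hC₁ huC₁ hb h1
          have hpv : IsCompOf G (insert v X) C := compOf_insert_of_ne hC₂ hvC₂ hb h2
          have hpuv : IsCompOf G (insert u (insert v X)) C :=
            compOf_insert_of_ne hC₁' huC₁ hpv h1
          simp [hpu, hpv, hpuv, hb]
    · by_cases ha : IsCompOf G (insert u (insert v X)) C
      · rcases compOf_insert_cases hC₁' huC₁ ha with hs1 | ⟨h2, hne1⟩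
        · have hpu : IsCompOf G (insert u X) C :=
            (compOf_irrel hC₁ hC₂ hC12 hvC₂ hs1 (Finset.subset_insert u X)).2
              (by rwa [Finset.insert_comm] at ha)
          have hnv : ¬ IsCompOf G (insert v X) C := by
            intro h
            rcases compOf_insert_cases hC₂ hvC₂ h with hs2 | ⟨hbX, _⟩
            · obtain ⟨c, hc⟩ := ha.1
              exact Finset.disjoint_left.1 hdisj (hs1 hc) (hs2 hc)
            · exact hb hbX
          simp [hpu, hnv, ha, hb]
        · rcases compOf_insert_cases hC₂ hvC₂ h2 with hs2 | ⟨hbX, _⟩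
          · have hpv : IsCompOf G (insert v X) C :=
              (compOf_irrel hC₂ hC₁ hC12.symm huC₁ hs2 (Finset.subset_insert v X)).2 ha
            have hnu : ¬ IsCompOf G (insert u X) C := by
              intro h
              rcases compOf_insert_cases hC₁ huC₁ h with hs1 | ⟨hbX, _⟩
              · obtain ⟨c, hc⟩ := ha.1
                exact Finset.disjoint_left.1 hdisj (hs1 hc) (hs2 hc)
              · exact hb hbX
            simp [hpv, hnu, ha, hb]
          · exact absurd hbX hb
      · have hnu : ¬ IsCompOf G (insert u X) C := by
          intro h
          rcases compOf_insert_cases hC₁ huC₁ h with hs1 | ⟨hbX, _⟩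
          · refine ha ?_
            rw [Finset.insert_comm]
            exact (compOf_irrel hC₁ hC₂ hC12 hvC₂ hs1 (Finset.subset_insert u X)).1 h
          · exact hb hbX
        have hnv : ¬ IsCompOf G (insert v X) C := by
          intro h
          rcases compOf_insert_cases hC₂ hvC₂ h with hs2 | ⟨hbX, _⟩
          · exact ha ((compOf_irrel hC₂ hC₁ hC12.symm huC₁ hs2 (Finset.subset_insert v X)).1 h)
          · exact hb hbX
        simp [hnu, hnv, ha, hb]
  have hsum :
      (∑ C ∈ Finset.univ.filter (fun C : Finset V => IsCompOf G (insert u X) C ∧ 2 ≤ C.card),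
        (3 : ℝ) ^ (C.card - 2)) +
      (∑ C ∈ Finset.univ.filter (fun C : Finset V => IsCompOf G (insert v X) C ∧ 2 ≤ C.card),
        (3 : ℝ) ^ (C.card - 2)) =
      (∑ C ∈ Finset.univ.filter
          (fun C : Finset V => IsCompOf G (insert u (insert v X)) C ∧ 2 ≤ C.card),
        (3 : ℝ) ^ (C.card - 2)) +
      (∑ C ∈ Finset.univ.filter (fun C : Finset V => IsCompOf G X C ∧ 2 ≤ C.card),
        (3 : ℝ) ^ (C.card - 2)) := by
    rw [Finset.sum_filter, Finset.sum_filter, Finset.sum_filter, Finset.sum_filter,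
      ← Finset.sum_add_distrib, ← Finset.sum_add_distrib]
    exact Finset.sum_congr rfl fun C _ => hkey C
  unfold devf
  linarith
end

section
/- Let G = (V,E) be a connected graph with n = |V| ≥ 2, and let f(X) = 3^{n−2} − Σ_{C ∈ 𝒞*(X)} 3^{|C|−2} be its Devadoss rank function. Let σ = (v₁,...,v_n) be an ordering of V and z the vector with z(v_k) = f({v₁,...,v_k}) − f({v₁,...,v_{k−1}}). If T is an elimination tree of G compatible with σ (i.e., whenever v_i is an ancestor of v_j in T, then i < j), then z = x^T, where x^T is defined by x^T(v) = 0 for leaves v and Σ_{u ∈ T(v)} x^T(u) = 3^{|T(v)|−2} for non-leaves v. -/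
attribute [local instance] Classical.propDecidable

/-- An elimination tree of a connected graph `G`: a rooted tree on the vertex set
(given by a parent function) such that every subtree induces a connected subgraph
and adjacent vertices are comparable.  This is equivalent to the recursive
definition: a root `v` whose children subtrees are elimination trees of the
connected components of `G − v`. -/
structure ElimTree {V : Type*} (G : SimpleGraph V) where
  root : V
  parent : V → V
  parent_root : parent root = root
  reaches_root : ∀ v, ∃ n, parent^[n] v = root
  connected_des : ∀ v : V, (G.induce {u | ∃ n, parent^[n] u = v}).Connected
  adj_comparable : ∀ u v : V, G.Adj u v →
    (∃ n, parent^[n] u = v) ∨ (∃ n, parent^[n] v = u)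

/-- The vertex set `T(v)` of the subtree of `T` rooted at `v` (including `v`). -/
def ElimTree.desSet {V : Type*} {G : SimpleGraph V} (T : ElimTree G) (v : V) : Set V :=
  {u | ∃ n, T.parent^[n] u = v}

/-- `u` is a strict ancestor of `w` in `T`. -/
def ElimTree.Anc {V : Type*} {G : SimpleGraph V} (T : ElimTree G) (u w : V) : Prop :=
  u ≠ w ∧ w ∈ T.desSet u

/-- `v` is a leaf of `T`. -/
def ElimTree.IsLeaf {V : Type*} {G : SimpleGraph V} (T : ElimTree G) (v : V) : Prop :=
  ∀ w, T.parent w = v → w = v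


section AuxLemmas

variable {V : Type*} {G : SimpleGraph V} (T : ElimTree G)

lemma mem_desSet_self (v : V) : v ∈ T.desSet v := ⟨0, rfl⟩

lemma desSet_trans {u w v : V} (h1 : u ∈ T.desSet w) (h2 : w ∈ T.desSet v) :
    u ∈ T.desSet v := by
  obtain ⟨n, hn⟩ := h1; obtain ⟨m, hm⟩ := h2
  exact ⟨m + n, by rw [Function.iterate_add_apply, hn, hm]⟩

lemma desSet_antisymm {u w : V} (h1 : u ∈ T.desSet w) (h2 : w ∈ T.desSet u) : u = w := by
  obtain ⟨n, hn⟩ := h1; obtain ⟨m, hm⟩ := h2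
  rcases Nat.eq_zero_or_pos n with h | h
  · subst h; exact hn
  have hcyc : T.parent^[m + n] u = u := by rw [Function.iterate_add_apply, hn, hm]
  obtain ⟨N, hN⟩ := T.reaches_root u
  have hroot : ∀ j : ℕ, T.parent^[(m+n)*j] u = u := by
    intro j; induction j with
    | zero => rfl
    | succ j ih => rw [Nat.mul_succ, Function.iterate_add_apply, hcyc, ih]
  have hmn : 0 < m + n := by omega
  have key : T.parent^[(m+n)*N] u = T.root := by
    have h1 : (m+n)*N = ((m+n)*N - N) + N :=
      (Nat.sub_add_cancel (Nat.le_mul_of_pos_left N hmn)).symm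
    rw [h1, Function.iterate_add_apply, hN, Function.iterate_fixed T.parent_root]
  have hu : u = T.root := by rw [← hroot N, key]
  subst hu
  rw [Function.iterate_fixed T.parent_root] at hn
  exact hn.symm ▸ rfl

lemma anc_comparable {a b v : V} (h1 : a ∈ T.desSet v) (h2 : a ∈ T.desSet b) :
    b ∈ T.desSet v ∨ v ∈ T.desSet b := by
  obtain ⟨n, hn⟩ := h1; obtain ⟨m, hm⟩ := h2
  rcases le_or_gt m n with h | h
  · left
    refine ⟨n - m, ?_⟩
    rw [← hm, ← Function.iterate_add_apply, Nat.sub_add_cancel h, hn]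
  · right
    refine ⟨m - n, ?_⟩
    rw [← hn, ← Function.iterate_add_apply, Nat.sub_add_cancel h.le, hm]

lemma leaf_iff_desSet_eq (v : V) : T.IsLeaf v ↔ T.desSet v = {v} := by
  constructor
  · intro hl
    ext u
    simp only [Set.mem_singleton_iff]
    constructor
    · rintro ⟨n, hn⟩
      induction n generalizing u with
      | zero => exact hn
      | succ n ih =>
        rw [Function.iterate_succ_apply] at hn
        have := ih (T.parent u) hn
        exact hl u this
    · rintro rfl; exact mem_desSet_self T _
  · intro h w hw
    have : w ∈ T.desSet v := ⟨1, hw⟩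
    rw [h] at this; exact this

lemma child_mem_desSet {c v : V} (h : T.parent c = v) : c ∈ T.desSet v := ⟨1, h⟩

/-- existence of the child through which a strict descendant passes -/
lemma exists_child {u v : V} (hu : u ∈ T.desSet v) (hne : u ≠ v) :
    ∃ c, T.parent c = v ∧ c ≠ v ∧ u ∈ T.desSet c := by
  obtain ⟨n, hn⟩ := hu
  have hex : ∃ n, T.parent^[n] u = v := ⟨n, hn⟩
  classical
  let n₀ := Nat.find hex
  have hn₀ : T.parent^[n₀] u = v := Nat.find_spec hex
  have hpos : 0 < n₀ := by
    rcases Nat.eq_zero_or_pos n₀ with h | h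
    · exfalso; apply hne; rw [← hn₀, h]; rfl
    · exact h
  refine ⟨T.parent^[n₀ - 1] u, ?_, ?_, ⟨n₀ - 1, rfl⟩⟩
  · rw [← Function.iterate_succ_apply' T.parent, Nat.succ_eq_add_one, Nat.sub_add_cancel hpos, hn₀]
  · intro hc
    exact absurd hc (by have := Nat.find_min hex (m := n₀ - 1) (by omega); simpa using this)

/-- a strict descendant of a child `c` of `v` other than `c` itself: ancestors of
descendants of `c` that contain `v` strictly above... -/
lemma child_unique {c c' v u : V} (hc : T.parent c = v) (hcne : c ≠ v)
    (hc' : T.parent c' = v) (hcne' : c' ≠ v)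
    (hu1 : u ∈ T.desSet c) (hu2 : u ∈ T.desSet c') : c = c' := by
  rcases anc_comparable T hu1 hu2 with h | h
  · -- c' ∈ desSet c : c' descendant of c
    obtain ⟨m, hm⟩ := h
    rcases Nat.eq_zero_or_pos m with h0 | h0
    · rw [h0] at hm; exact (by simpa using hm : c' = c).symm
    ·
      exfalso
      -- v = parent c' so parent^[m] c' = parent^[m-1] v = c, so c is an ancestor of v
      have : T.parent^[m-1] v = c := by
        rw [← hc', ← Function.iterate_succ_apply, Nat.succ_eq_add_one, Nat.sub_add_cancel h0, hm]
      have h1 : v ∈ T.desSet c := ⟨m - 1, this⟩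
      have h2 : c ∈ T.desSet v := child_mem_desSet T hc
      exact hcne (desSet_antisymm T h2 h1)
  · obtain ⟨m, hm⟩ := h
    rcases Nat.eq_zero_or_pos m with h0 | h0
    · rw [h0] at hm; simpa using hm
    · exfalso
      have : T.parent^[m-1] v = c' := by
        rw [← hc, ← Function.iterate_succ_apply, Nat.succ_eq_add_one, Nat.sub_add_cancel h0, hm]
      have h1 : v ∈ T.desSet c' := ⟨m - 1, this⟩
      have h2 : c' ∈ T.desSet v := child_mem_desSet T hc'
      exact hcne' (desSet_antisymm T h2 h1)

end AuxLemmas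

section CompLemmas

variable {V : Type*} {G : SimpleGraph V}

lemma comp_subset_of_mem {X C C' : Finset V} (hC : IsCompOf G X C) (hC' : IsCompOf G X C')
    {w : V} (hw : w ∈ C) (hw' : w ∈ C') : C ⊆ C' := by
  obtain ⟨-, hdisj, hconn, -⟩ := hC
  obtain ⟨-, -, -, hclose'⟩ := hC'
  intro a ha
  have hreach : (G.induce (C : Set V)).Reachable ⟨w, by simpa using hw⟩ ⟨a, by simpa using ha⟩ :=
    hconn.preconnected _ _
  obtain ⟨p⟩ := hreach
  have key : ∀ (s t : (C : Set V)) (p : (G.induce (C : Set V)).Walk s t),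
      (s : V) ∈ C' → (t : V) ∈ C' := by
    intro s t p
    induction p with
    | nil => exact id
    | @cons u' v' w' h p ih =>
      intro hu
      apply ih
      have hadj : G.Adj (u' : V) (v' : V) := h
      have hvC : (v' : V) ∈ C := by simpa using v'.2
      have hvX : (v' : V) ∉ X := fun hx => (Finset.disjoint_left.mp hdisj hvC) hx
      exact hclose' _ hu _ hvX hadj
  exact key _ _ p (by simpa using hw')

lemma comp_eq_of_mem {X C C' : Finset V} (hC : IsCompOf G X C) (hC' : IsCompOf G X C')
    {w : V} (hw : w ∈ C) (hw' : w ∈ C') : C = C' :=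
  Finset.Subset.antisymm (comp_subset_of_mem hC hC' hw hw') (comp_subset_of_mem hC' hC hw' hw)

end CompLemmas

section MainAux

variable {V : Type*} [Fintype V] {G : SimpleGraph V} (T : ElimTree G)

/-- the finset of descendants -/
noncomputable def Dfin (T : ElimTree G) (v : V) : Finset V :=
  Finset.univ.filter (· ∈ T.desSet v)

lemma mem_Dfin {v u : V} : u ∈ Dfin T v ↔ u ∈ T.desSet v := by
  simp [Dfin]

lemma coe_Dfin (v : V) : ((Dfin T v : Finset V) : Set V) = T.desSet v := by
  ext u; simp [Dfin]

lemma anc_of_child {c v u : V} (hc : T.parent c = v) (h : T.Anc u c) :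
    u = v ∨ T.Anc u v := by
  obtain ⟨hne, m, hm⟩ := h
  have hpos : 0 < m := by
    rcases Nat.eq_zero_or_pos m with h0 | h0
    · exact absurd (by rw [h0] at hm; exact hm.symm) hne
    · exact h0
  have hv : T.parent^[m-1] v = u := by
    rw [← hc, ← Function.iterate_succ_apply, Nat.succ_eq_add_one, Nat.sub_add_cancel hpos, hm]
  by_cases huv : u = v
  · exact Or.inl huv
  · exact Or.inr ⟨huv, m - 1, hv⟩

lemma comp_des (v : V) (X : Finset V)
    (hanc : ∀ u, T.Anc u v → u ∈ X)
    (hdis : ∀ u ∈ T.desSet v, u ∉ X) :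
    IsCompOf G X (Dfin T v) := by
  refine ⟨⟨v, (mem_Dfin T).mpr (mem_desSet_self T v)⟩, ?_, ?_, ?_⟩
  · rw [Finset.disjoint_left]
    intro u hu hx
    exact hdis u ((mem_Dfin T).mp hu) hx
  · rw [coe_Dfin]
    exact T.connected_des v
  · intro a ha b hbX hadj
    rw [mem_Dfin] at ha ⊢
    rcases T.adj_comparable a b hadj with ⟨n, hn⟩ | ⟨n, hn⟩
    · -- a ∈ desSet b
      rcases anc_comparable T ha ⟨n, hn⟩ with h | h
      · exact h
      · by_cases hbv : b = v
        · rw [hbv]; exact mem_desSet_self T v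
        · exact absurd (hanc b ⟨hbv, h⟩) hbX
    · exact desSet_trans T ⟨n, hn⟩ ha

lemma nonleaf_two_le_card {v : V} (h : ¬ T.IsLeaf v) : 2 ≤ (Dfin T v).card := by
  rw [ElimTree.IsLeaf] at h
  push_neg at h
  obtain ⟨c, hc, hcne⟩ := h
  have : 1 < (Dfin T v).card := Finset.one_lt_card.mpr
    ⟨v, (mem_Dfin T).mpr (mem_desSet_self T v), c,
      (mem_Dfin T).mpr (child_mem_desSet T hc), fun h => hcne h.symm⟩
  omega

lemma leaf_Dfin {v : V} (h : T.IsLeaf v) : Dfin T v = {v} := by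
  ext u
  rw [mem_Dfin, (leaf_iff_desSet_eq T v).mp h]
  simp

lemma Dfin_card_eq_ncard (v : V) : (T.desSet v).ncard = (Dfin T v).card := by
  rw [← coe_Dfin T v, Set.ncard_coe_finset]

end MainAux

set_option maxHeartbeats 1000000 in
theorem stmt_9 {V : Type*} [Fintype V] (G : SimpleGraph V) (hG : G.Connected)
    (hn : 2 ≤ Fintype.card V) (σ : Fin (Fintype.card V) ≃ V)
    (T : ElimTree G)
    (hcompat : ∀ i j : Fin (Fintype.card V), T.Anc (σ i) (σ j) → i < j)
    (z : V → ℝ)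
    (hz : ∀ k : Fin (Fintype.card V),
      z (σ k) = devf G ((Finset.Iic k).image σ) - devf G ((Finset.Iio k).image σ))
    (x : V → ℝ)
    (hleaf : ∀ v : V, T.IsLeaf v → x v = 0)
    (hspec : ∀ v : V, ¬ T.IsLeaf v →
      ∑ u ∈ Finset.univ.filter (fun u => u ∈ T.desSet v), x u
        = 3 ^ ((T.desSet v).ncard - 2)) :
    z = x := by
  funext v₀
  obtain ⟨k, rfl⟩ : ∃ k, σ k = v₀ := ⟨σ.symm v₀, σ.apply_symm_apply v₀⟩
  -- index membership
  have hmemX1 : ∀ u, u ∈ (Finset.Iio k).image σ ↔ σ.symm u < k := by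
    intro u
    constructor
    · intro hu
      obtain ⟨i, hi, rfl⟩ := Finset.mem_image.mp hu
      simpa using Finset.mem_Iio.mp hi
    · intro h
      exact Finset.mem_image.mpr ⟨σ.symm u, Finset.mem_Iio.mpr h, σ.apply_symm_apply u⟩
  have hmemX2 : ∀ u, u ∈ (Finset.Iic k).image σ ↔ σ.symm u ≤ k := by
    intro u
    constructor
    · intro hu
      obtain ⟨i, hi, rfl⟩ := Finset.mem_image.mp hu
      simpa using Finset.mem_Iic.mp hi
    · intro h
      exact Finset.mem_image.mpr ⟨σ.symm u, Finset.mem_Iic.mpr h, σ.apply_symm_apply u⟩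
  have hanc_lt : ∀ u w, T.Anc u w → σ.symm u < σ.symm w := by
    intro u w h
    have := hcompat (σ.symm u) (σ.symm w) (by simpa using h)
    exact this
  have hdes_ge : ∀ u ∈ T.desSet (σ k), k ≤ σ.symm u := by
    intro u hu
    by_cases huv : u = σ k
    · subst huv; simp
    · have h := hanc_lt (σ k) u ⟨fun h => huv h.symm, hu⟩
      simp only [Equiv.symm_apply_apply] at h
      exact h.le
  -- the subtree at σ k is a component of G − X1
  have hDv : IsCompOf G ((Finset.Iio k).image σ) (Dfin T (σ k)) := by
    apply comp_des
    · intro u hu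
      have := hanc_lt u (σ k) hu
      simp only [Equiv.symm_apply_apply] at this
      exact (hmemX1 u).mpr this
    · intro u hu hX
      have h1 := (hmemX1 u).mp hX
      have h2 := hdes_ge u hu
      exact absurd h1 (not_lt.mpr h2)
  -- subtrees at children of σ k are components of G − X2
  have hDc : ∀ c, T.parent c = σ k → c ≠ σ k →
      IsCompOf G ((Finset.Iic k).image σ) (Dfin T c) := by
    intro c hc hcne
    apply comp_des
    · intro u hu
      rcases anc_of_child T hc hu with rfl | h
      · exact (hmemX2 _).mpr (by simp)
      · have := hanc_lt u (σ k) h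
        simp only [Equiv.symm_apply_apply] at this
        exact (hmemX2 u).mpr this.le
    · intro u hu hX
      have huv : u ≠ σ k := by
        intro h; subst h
        exact hcne (desSet_antisymm T (child_mem_desSet T hc) hu)
      have h1 : u ∈ T.desSet (σ k) := desSet_trans T hu (child_mem_desSet T hc)
      have h2 := hanc_lt (σ k) u ⟨fun h => huv h.symm, h1⟩
      simp only [Equiv.symm_apply_apply] at h2
      exact absurd ((hmemX2 u).mp hX) (not_le.mpr h2)
  -- children finset
  set ch : Finset V := Finset.univ.filter (fun c => T.parent c = σ k ∧ c ≠ σ k) with hch_def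
  have hch_mem : ∀ c, c ∈ ch ↔ T.parent c = σ k ∧ c ≠ σ k := by
    intro c; simp [hch_def]
  -- z computation
  have hzv : z (σ k) =
      (∑ C ∈ Finset.univ.filter
          (fun C : Finset V => IsCompOf G ((Finset.Iio k).image σ) C ∧ 2 ≤ C.card),
        (3:ℝ)^(C.card-2))
      - ∑ C ∈ Finset.univ.filter
          (fun C : Finset V => IsCompOf G ((Finset.Iic k).image σ) C ∧ 2 ≤ C.card),
        (3:ℝ)^(C.card-2) := by
    rw [hz k]; unfold devf; ring
  set F1 : Finset (Finset V) := Finset.univ.filter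
      (fun C : Finset V => IsCompOf G ((Finset.Iio k).image σ) C ∧ 2 ≤ C.card) with hF1
  set F2 : Finset (Finset V) := Finset.univ.filter
      (fun C : Finset V => IsCompOf G ((Finset.Iic k).image σ) C ∧ 2 ≤ C.card) with hF2
  set P : Finset V → Prop := fun C => Disjoint C (Dfin T (σ k)) with hP
  have hX2eq : (Finset.Iic k).image σ = insert (σ k) ((Finset.Iio k).image σ) := by
    rw [← Finset.Iio_insert, Finset.image_insert]
  have hX12 : (Finset.Iio k).image σ ⊆ (Finset.Iic k).image σ := by
    rw [hX2eq]; exact Finset.subset_insert _ _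
  -- components disjoint from the subtree are the same before and after
  have h_eq_disj : F1.filter P = F2.filter P := by
    ext C
    simp only [hF1, hF2, Finset.mem_filter, Finset.mem_univ, true_and]
    constructor
    · rintro ⟨⟨hC, hcard⟩, hdisj⟩
      refine ⟨⟨⟨hC.1, ?_, hC.2.2.1, ?_⟩, hcard⟩, hdisj⟩
      · rw [hX2eq, Finset.disjoint_insert_right]
        refine ⟨fun h => Finset.disjoint_left.mp hdisj h
          ((mem_Dfin T).mpr (mem_desSet_self T _)), hC.2.1⟩
      · intro a ha b hbX hadj
        exact hC.2.2.2 a ha b (fun h => hbX (hX12 h)) hadj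
    · rintro ⟨⟨hC, hcard⟩, hdisj⟩
      refine ⟨⟨⟨hC.1, Finset.disjoint_of_subset_right hX12 hC.2.1, hC.2.2.1, ?_⟩, hcard⟩, hdisj⟩
      intro a ha b hbX hadj
      by_cases hbv : b = σ k
      · exfalso
        subst hbv
        rcases T.adj_comparable a (σ k) hadj with ⟨n, hn⟩ | ⟨n, hn⟩
        · exact Finset.disjoint_left.mp hdisj ha ((mem_Dfin T).mpr ⟨n, hn⟩)
        · by_cases hab : a = σ k
          · subst hab
            exact Finset.disjoint_left.mp hC.2.1 ha ((hmemX2 _).mpr (by simp))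
          · have ha1 := hanc_lt a (σ k) ⟨hab, n, hn⟩
            simp only [Equiv.symm_apply_apply] at ha1
            exact Finset.disjoint_left.mp hC.2.1 ha ((hmemX2 a).mpr ha1.le)
      · have hbX2 : b ∉ (Finset.Iic k).image σ := by
          rw [hX2eq]
          simp only [Finset.mem_insert]
          push_neg
          exact ⟨hbv, hbX⟩
        exact hC.2.2.2 a ha b hbX2 hadj
  have h_F1_nonP : F1.filter (fun C => ¬ P C) =
      if 2 ≤ (Dfin T (σ k)).card then {Dfin T (σ k)} else (∅ : Finset (Finset V)) := by
    ext C
    simp only [hF1, Finset.mem_filter, Finset.mem_univ, true_and]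
    constructor
    · rintro ⟨⟨hC, hcard⟩, hnd⟩
      rw [hP, Finset.not_disjoint_iff] at hnd
      obtain ⟨w, hw1, hw2⟩ := hnd
      have hCeq : C = Dfin T (σ k) := comp_eq_of_mem hC hDv hw1 hw2
      subst hCeq
      rw [if_pos hcard]
      simp
    · intro hC
      by_cases h2 : 2 ≤ (Dfin T (σ k)).card
      · rw [if_pos h2, Finset.mem_singleton] at hC
        subst hC
        refine ⟨⟨hDv, h2⟩, ?_⟩
        rw [hP, Finset.not_disjoint_iff]
        exact ⟨σ k, (mem_Dfin T).mpr (mem_desSet_self T _),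
          (mem_Dfin T).mpr (mem_desSet_self T _)⟩
      · rw [if_neg h2] at hC
        simp at hC
  have h_F2_nonP : F2.filter (fun C => ¬ P C) =
      (ch.filter (fun c => 2 ≤ (Dfin T c).card)).image (Dfin T) := by
    ext C
    simp only [hF2, Finset.mem_filter, Finset.mem_univ, true_and]
    constructor
    · rintro ⟨⟨hC, hcard⟩, hnd⟩
      rw [hP, Finset.not_disjoint_iff] at hnd
      obtain ⟨w, hwC, hwD⟩ := hnd
      have hwv : w ≠ σ k := by
        intro h; subst h
        exact Finset.disjoint_left.mp hC.2.1 hwC ((hmemX2 _).mpr (by simp))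
      obtain ⟨c, hc, hcne, hwc⟩ := exists_child T ((mem_Dfin T).mp hwD) hwv
      have hCeq : C = Dfin T c :=
        comp_eq_of_mem hC (hDc c hc hcne) hwC ((mem_Dfin T).mpr hwc)
      refine Finset.mem_image.mpr ⟨c, Finset.mem_filter.mpr
        ⟨(hch_mem c).mpr ⟨hc, hcne⟩, hCeq ▸ hcard⟩, hCeq.symm⟩
    · intro hC
      obtain ⟨c, hcmem, rfl⟩ := Finset.mem_image.mp hC
      obtain ⟨hcch, hccard⟩ := Finset.mem_filter.mp hcmem
      obtain ⟨hc, hcne⟩ := (hch_mem c).mp hcch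
      refine ⟨⟨hDc c hc hcne, hccard⟩, ?_⟩
      rw [hP, Finset.not_disjoint_iff]
      exact ⟨c, (mem_Dfin T).mpr (mem_desSet_self T _),
        (mem_Dfin T).mpr (child_mem_desSet T hc)⟩
  have hinj : ∀ c ∈ ch.filter (fun c => 2 ≤ (Dfin T c).card),
      ∀ c' ∈ ch.filter (fun c => 2 ≤ (Dfin T c).card), Dfin T c = Dfin T c' → c = c' := by
    intro c hc c' hc' heq
    obtain ⟨hc1, hc2⟩ := (hch_mem c).mp (Finset.mem_filter.mp hc).1
    obtain ⟨hc1', hc2'⟩ := (hch_mem c').mp (Finset.mem_filter.mp hc').1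
    have : c ∈ Dfin T c' := heq ▸ (mem_Dfin T).mpr (mem_desSet_self T c)
    exact child_unique T hc1 hc2 hc1' hc2' (mem_desSet_self T c) ((mem_Dfin T).mp this)
  have hz2 : z (σ k) =
      (if 2 ≤ (Dfin T (σ k)).card then (3:ℝ)^((Dfin T (σ k)).card - 2) else 0)
      - ∑ c ∈ ch.filter (fun c => 2 ≤ (Dfin T c).card), (3:ℝ)^((Dfin T c).card - 2) := by
    rw [hzv, ← Finset.sum_filter_add_sum_filter_not F1 P (fun C => (3:ℝ)^(C.card-2)),
      ← Finset.sum_filter_add_sum_filter_not F2 P (fun C => (3:ℝ)^(C.card-2)),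
      h_eq_disj, h_F1_nonP, h_F2_nonP, Finset.sum_image hinj]
    by_cases h2 : 2 ≤ (Dfin T (σ k)).card
    · rw [if_pos h2, if_pos h2]
      simp only [Finset.sum_singleton]
      ring
    · rw [if_neg h2, if_neg h2]
      simp only [Finset.sum_empty]
      ring
  -- now the x side
  by_cases hleafv : T.IsLeaf (σ k)
  · rw [hleaf _ hleafv, hz2]
    have hchE : ch = ∅ := by
      ext c
      simp only [Finset.notMem_empty, iff_false]
      intro hc
      obtain ⟨h1, h2⟩ := (hch_mem c).mp hc
      exact h2 (hleafv c h1)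
    have hcard1 : (Dfin T (σ k)).card = 1 := by
      rw [leaf_Dfin T hleafv]; simp
    rw [hchE]
    simp [hcard1]
  · have h2 : 2 ≤ (Dfin T (σ k)).card := nonleaf_two_le_card T hleafv
    have hsum : ∑ u ∈ Dfin T (σ k), x u = (3:ℝ)^((Dfin T (σ k)).card - 2) := by
      have := hspec (σ k) hleafv
      rw [Dfin_card_eq_ncard T (σ k)] at this
      exact this
    -- partition of the subtree
    have hnotmem : σ k ∉ ch.biUnion (fun c => Dfin T c) := by
      intro h
      obtain ⟨c, hc, hmem⟩ := Finset.mem_biUnion.mp h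
      obtain ⟨h1, h2⟩ := (hch_mem c).mp hc
      exact h2 (desSet_antisymm T (child_mem_desSet T h1) ((mem_Dfin T).mp hmem))
    have hpart : Dfin T (σ k) = insert (σ k) (ch.biUnion (fun c => Dfin T c)) := by
      ext u
      simp only [Finset.mem_insert, Finset.mem_biUnion]
      constructor
      · intro hu
        by_cases huv : u = σ k
        · exact Or.inl huv
        · obtain ⟨c, hc, hcne, hmem⟩ := exists_child T ((mem_Dfin T).mp hu) huv
          exact Or.inr ⟨c, (hch_mem c).mpr ⟨hc, hcne⟩, (mem_Dfin T).mpr hmem⟩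
      · rintro (rfl | ⟨c, hc, hmem⟩)
        · exact (mem_Dfin T).mpr (mem_desSet_self T _)
        · obtain ⟨h1, h2⟩ := (hch_mem c).mp hc
          exact (mem_Dfin T).mpr
            (desSet_trans T ((mem_Dfin T).mp hmem) (child_mem_desSet T h1))
    have hpd : (↑ch : Set V).PairwiseDisjoint (fun c => Dfin T c) := by
      intro c hc c' hc' hne
      rw [Function.onFun, Finset.disjoint_left]
      intro u hu hu'
      obtain ⟨h1, h2⟩ := (hch_mem c).mp (by simpa using hc)
      obtain ⟨h1', h2'⟩ := (hch_mem c').mp (by simpa using hc')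
      exact hne (child_unique T h1 h2 h1' h2' ((mem_Dfin T).mp hu) ((mem_Dfin T).mp hu'))
    have hsplit : ∑ u ∈ Dfin T (σ k), x u
        = x (σ k) + ∑ c ∈ ch, ∑ u ∈ Dfin T c, x u := by
      rw [hpart, Finset.sum_insert hnotmem, Finset.sum_biUnion hpd]
    have hinner : ∀ c ∈ ch, (∑ u ∈ Dfin T c, x u)
        = (if 2 ≤ (Dfin T c).card then (3:ℝ)^((Dfin T c).card - 2) else 0) := by
      intro c _
      by_cases hlc : T.IsLeaf c
      · have hc1 : (Dfin T c).card = 1 := by rw [leaf_Dfin T hlc]; simp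
        rw [if_neg (by omega), leaf_Dfin T hlc, Finset.sum_singleton, hleaf c hlc]
      · rw [if_pos (nonleaf_two_le_card T hlc)]
        have := hspec c hlc
        rw [Dfin_card_eq_ncard T c] at this
        exact this
    have hxsum : ∑ c ∈ ch, ∑ u ∈ Dfin T c, x u
        = ∑ c ∈ ch.filter (fun c => 2 ≤ (Dfin T c).card), (3:ℝ)^((Dfin T c).card - 2) := by
      rw [Finset.sum_congr rfl hinner]
      exact (Finset.sum_filter _ _).symm
    rw [hz2, if_pos h2]
    have := hsplit
    rw [hsum, hxsum] at this
    linarith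
end

section
/- Let T and T′ be elimination trees of a connected graph G such that T′ is obtained from T by a single swap of vertices u and v (where u is the parent of v in T). Let U ⊆ V with G[U] connected. If {u, v} ⊄ U, then the projections coincide: T′|_U = T|_U. If {u,v} ⊆ U, then either T′|_U = T|_U, or T′|_U is obtained from T|_U by swapping u and v. -/
attribute [local instance] Classical.propDecidable

/-- Vertices u and w lie in the same connected component of H − v,
where H is the subgraph of G induced by the subtree of T rooted at the parent u of v. -/
def SameCompAfter {V : Type*} {G : SimpleGraph V} (T : ElimTree G) (u v w : V) : Prop :=
  ∃ (hu : u ∈ T.desSet u \ {v}) (hw : w ∈ T.desSet u \ {v}),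
    (G.induce (T.desSet u \ {v})).Reachable ⟨u, hu⟩ ⟨w, hw⟩

/-- T' is obtained from T by the swap of u with v, where u is the parent of v in T:
v becomes the parent of u (and takes the place of u), the subtrees rooted at u stay
at u, and a subtree S rooted at a child w of v stays at v unless its vertices lie
in the same connected component as u of H − v, where H is the subgraph induced by
the subtree containing u, v and its subtrees, in which case S moves to u. -/
def SwapRel {V : Type*} {G : SimpleGraph V} (T T' : ElimTree G) (u v : V) : Prop :=
  u ≠ v ∧ T.parent v = u ∧
  T'.parent u = v ∧
  (u = T.root → T'.root = v ∧ T'.parent v = v) ∧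
  (u ≠ T.root → T'.root = T.root ∧ T'.parent v = T.parent u) ∧
  ∀ w : V, w ≠ u → w ≠ v →
    ((T.parent w = v ∧ SameCompAfter T u v w) → T'.parent w = u) ∧
    (¬ (T.parent w = v ∧ SameCompAfter T u v w) → T'.parent w = T.parent w)

/-- TU is the projection of T to U: the elimination tree of the induced subgraph
G[U] preserving the ancestor order of T, characterized by: a is an ancestor of b
in TU iff a is an ancestor of b in T and a, b are connected in G[U] minus the
strict ancestors of a in T. -/
def IsProjection {V : Type*} {G : SimpleGraph V} (T : ElimTree G) (U : Set V)
    (TU : ElimTree (G.induce U)) : Prop :=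
  ∀ a b : U, TU.Anc a b ↔
    (T.Anc (a : V) (b : V) ∧
      ∃ (ha : (a : V) ∈ U \ {w : V | T.Anc w (a : V)})
        (hb : (b : V) ∈ U \ {w : V | T.Anc w (a : V)}),
        (G.induce (U \ {w : V | T.Anc w (a : V)})).Reachable ⟨(a : V), ha⟩ ⟨(b : V), hb⟩)

/-!
The projection `TU` is determined by its strict ancestor relation, and `a` is a strict ancestor
of `b` in `TU` iff `b ≠ a` is reachable from `a` in `G[U]` minus the `T`-ancestors of `a` (such
vertices lie below `a`). From `T` to `T'`, subtrees of vertices other than `v` only shrink and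
those of vertices other than `u` only grow. Hence for `z ∉ {u, v}` no vertex below `z` in one tree
is above `z` in the other, so `z` reaches the same vertices while avoiding its ancestors in either
tree, and only the rows of `u` and `v` of the ancestor relation can change. If `u` does not reach
`v` in `G[U]` avoiding the ancestors of `u`, they do not change and `TU' = TU`. Otherwise `v`
becomes an ancestor of the whole old subtree `TU(u)`, and `u` stays an ancestor of exactly its
component in `TU(u) - v`; an ancestor relation of this shape forces the parent function of the
swap of `u` and `v` in `TU`.
-/

namespace SimpleGraph

variable {V : Type*} {G : SimpleGraph V} {S S' : Set V} {a b c : V}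

def ReachIn (G : SimpleGraph V) (S : Set V) (a b : V) : Prop :=
  ∃ (ha : a ∈ S) (hb : b ∈ S), (G.induce S).Reachable ⟨a, ha⟩ ⟨b, hb⟩

namespace ReachIn

theorem refl (ha : a ∈ S) : G.ReachIn S a a :=
  ⟨ha, ha, .rfl⟩

theorem mem_left (h : G.ReachIn S a b) : a ∈ S :=
  h.1

theorem mem_right (h : G.ReachIn S a b) : b ∈ S :=
  h.2.1

theorem symm (h : G.ReachIn S a b) : G.ReachIn S b a :=
  let ⟨ha, hb, hr⟩ := h
  ⟨hb, ha, hr.symm⟩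

theorem trans (hab : G.ReachIn S a b) (hbc : G.ReachIn S b c) : G.ReachIn S a c :=
  let ⟨ha, _, hr⟩ := hab
  let ⟨_, hc, hr'⟩ := hbc
  ⟨ha, hc, hr.trans hr'⟩

theorem step (h : G.ReachIn S a b) (hbc : G.Adj b c) (hc : c ∈ S) : G.ReachIn S a c :=
  h.trans ⟨h.mem_right, hc, SimpleGraph.Adj.reachable (G := G.induce S) hbc⟩

theorem induction_on {P : V → Prop} (h : G.ReachIn S a b) (ha : P a)
    (hstep : ∀ x y, x ∈ S → y ∈ S → G.Adj x y → P x → P y) : P b := by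
  obtain ⟨haS, hbS, hr⟩ := h
  rw [reachable_iff_reflTransGen] at hr
  suffices ∀ y : S, Relation.ReflTransGen (G.induce S).Adj ⟨a, haS⟩ y → P y from this _ hr
  intro y hy
  induction hy with
  | refl => exact ha
  | tail _ hxy ih => exact hstep _ _ (Subtype.prop _) (Subtype.prop _) hxy ih

theorem mono (hS : S ⊆ S') (h : G.ReachIn S a b) : G.ReachIn S' a b :=
  let ⟨ha, hb, hr⟩ := h
  ⟨hS ha, hS hb, hr.map (G.induceHomOfLE hS).toHom⟩

theorem restrict (h : G.ReachIn S a b) (hS' : ∀ x, G.ReachIn S a x → x ∈ S') :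
    G.ReachIn S' a b :=
  (h.induction_on (P := fun x => G.ReachIn S a x ∧ G.ReachIn S' a x)
    ⟨.refl h.mem_left, .refl (hS' a (.refl h.mem_left))⟩
    fun _ y _ hy hxy ⟨hx, hx'⟩ => ⟨hx.step hxy hy, hx'.step hxy (hS' y (hx.step hxy hy))⟩).2

theorem diff_singleton (h : G.ReachIn S a b) (hc : ¬ G.ReachIn S a c) :
    G.ReachIn (S \ {c}) a b :=
  h.restrict fun _ hx => ⟨hx.mem_right, fun hxc => hc (hxc ▸ hx)⟩

end ReachIn

theorem reachIn_induce_iff {U : Set V} {W : Set U} {a b : U} :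
    (G.induce U).ReachIn W a b ↔ G.ReachIn (Subtype.val '' W) a b := by
  constructor
  · intro h
    exact h.induction_on (P := fun x : U => G.ReachIn (Subtype.val '' W) a x)
      (.refl ⟨a, h.mem_left, rfl⟩) fun _ y _ hy hxy hx => hx.step hxy ⟨y, hy, rfl⟩
  · intro h
    obtain ⟨hb, hr⟩ := h.induction_on
      (P := fun x => ∃ hx : x ∈ U, (G.induce U).ReachIn W a ⟨x, hx⟩)
      ⟨a.2, .refl (by obtain ⟨a', ha', he⟩ := h.mem_left; exact Subtype.ext he ▸ ha')⟩
      (by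
        rintro _ _ _ ⟨y, hy, rfl⟩ hxy ⟨_, hr⟩
        exact ⟨y.2, hr.step hxy hy⟩)
    exact hr

end SimpleGraph

namespace ElimTree

open SimpleGraph

variable {V : Type*} {G : SimpleGraph V} {T : ElimTree G} {a b c w : V}

def ancSet (T : ElimTree G) (a : V) : Set V :=
  {w | T.Anc w a}

theorem mem_desSet_self (T : ElimTree G) (a : V) : a ∈ T.desSet a :=
  ⟨0, rfl⟩

theorem mem_desSet_parent (T : ElimTree G) (a : V) : a ∈ T.desSet (T.parent a) :=
  ⟨1, rfl⟩

theorem mem_desSet_trans (hab : a ∈ T.desSet b) (hbc : b ∈ T.desSet c) : a ∈ T.desSet c := by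
  obtain ⟨n, hn⟩ := hab
  obtain ⟨m, hm⟩ := hbc
  exact ⟨m + n, by rw [Function.iterate_add_apply, hn, hm]⟩

theorem parent_mem_desSet (h : a ∈ T.desSet w) (hne : a ≠ w) : T.parent a ∈ T.desSet w := by
  obtain ⟨_ | n, hn⟩ := h
  · exact absurd hn hne
  · exact ⟨n, by rwa [Function.iterate_succ_apply] at hn⟩

theorem iterate_parent_root (T : ElimTree G) (n : ℕ) : T.parent^[n] T.root = T.root :=
  Function.iterate_fixed T.parent_root n

theorem eq_root_of_root_mem_desSet (h : T.root ∈ T.desSet a) : a = T.root := by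
  obtain ⟨n, hn⟩ := h
  rw [iterate_parent_root] at hn
  exact hn.symm

theorem eq_root_of_isPeriodicPt {n : ℕ} (hn : 0 < n) (h : Function.IsPeriodicPt T.parent n a) :
    a = T.root := by
  obtain ⟨N, hN⟩ := T.reaches_root a
  have hle : N ≤ n * N := Nat.le_mul_of_pos_left N hn
  calc a = T.parent^[n * N] a := ((h.mul_const N).eq).symm
    _ = T.parent^[n * N - N] (T.parent^[N] a) := by
      rw [← Function.iterate_add_apply, Nat.sub_add_cancel hle]
    _ = T.root := by rw [hN, iterate_parent_root]

theorem eq_of_mem_desSet_of_mem_desSet (hab : a ∈ T.desSet b) (hba : b ∈ T.desSet a) :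
    a = b := by
  obtain ⟨n, hn⟩ := hab
  obtain ⟨m, hm⟩ := hba
  rcases Nat.eq_zero_or_pos (m + n) with h | h
  · rw [show m = 0 by omega] at hm
    exact hm.symm
  · have ha : Function.IsPeriodicPt T.parent (m + n) a := by
      rw [Function.IsPeriodicPt, Function.IsFixedPt, Function.iterate_add_apply, hn, hm]
    have hb : Function.IsPeriodicPt T.parent (n + m) b := by
      rw [Function.IsPeriodicPt, Function.IsFixedPt, Function.iterate_add_apply, hm, hn]
    rw [eq_root_of_isPeriodicPt h ha, eq_root_of_isPeriodicPt (by omega) hb]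

theorem parent_ne_self (h : a ≠ T.root) : T.parent a ≠ a := fun hp =>
  h (eq_root_of_isPeriodicPt one_pos hp)

theorem mem_desSet_total (ha : c ∈ T.desSet a) (hb : c ∈ T.desSet b) :
    a ∈ T.desSet b ∨ b ∈ T.desSet a := by
  obtain ⟨n, hn⟩ := ha
  obtain ⟨m, hm⟩ := hb
  rcases le_total n m with h | h
  · exact .inl ⟨m - n, by rw [← hn, ← Function.iterate_add_apply, Nat.sub_add_cancel h, hm]⟩
  · exact .inr ⟨n - m, by rw [← hm, ← Function.iterate_add_apply, Nat.sub_add_cancel h, hn]⟩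

theorem not_anc_self (T : ElimTree G) (a : V) : ¬ T.Anc a a :=
  fun h => h.1 rfl

theorem not_anc_root (T : ElimTree G) (w : V) : ¬ T.Anc w T.root :=
  fun h => h.1 (eq_root_of_root_mem_desSet h.2)

theorem anc_root (h : a ≠ T.root) : T.Anc T.root a :=
  ⟨fun he => h he.symm, T.reaches_root a⟩

theorem eq_root_of_forall_not_anc (h : ∀ w, ¬ T.Anc w a) : a = T.root :=
  by_contra fun hne => h _ (anc_root hne)

theorem mem_desSet_iff_eq_or_anc : b ∈ T.desSet a ↔ b = a ∨ T.Anc a b := by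
  by_cases hba : b = a
  · simp [hba, mem_desSet_self]
  · exact ⟨fun h => .inr ⟨Ne.symm hba, h⟩, fun h => h.resolve_left hba |>.2⟩

theorem anc_iff_eq_parent_or_anc_parent (ha : a ≠ T.root) :
    T.Anc w a ↔ w = T.parent a ∨ T.Anc w (T.parent a) := by
  constructor
  · rintro ⟨hwa, hd⟩
    by_cases hw : w = T.parent a
    · exact .inl hw
    · exact .inr ⟨hw, parent_mem_desSet hd (Ne.symm hwa)⟩
  · rintro (rfl | ⟨hwp, hd⟩)
    · exact ⟨parent_ne_self ha, T.mem_desSet_parent a⟩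
    · refine ⟨fun hwa => hwp ?_, mem_desSet_trans (T.mem_desSet_parent a) hd⟩
      subst hwa
      exact eq_of_mem_desSet_of_mem_desSet (T.mem_desSet_parent w) hd

theorem anc_parent (ha : a ≠ T.root) : T.Anc (T.parent a) a :=
  (anc_iff_eq_parent_or_anc_parent ha).2 (.inl rfl)

theorem anc_iff_of_parent_eq (hab : T.parent a = b) (hne : b ≠ a) :
    T.Anc w a ↔ w = b ∨ T.Anc w b := by
  have ha : a ≠ T.root := fun ha => hne (by rw [← hab, ha, T.parent_root])
  rw [anc_iff_eq_parent_or_anc_parent ha, hab]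

theorem ancSet_eq_insert_of_parent_eq (hab : T.parent a = b) (hne : b ≠ a) :
    T.ancSet a = insert b (T.ancSet b) :=
  Set.ext fun _ => anc_iff_of_parent_eq hab hne

theorem Anc.trans (hab : T.Anc a b) (hbc : T.Anc b c) : T.Anc a c :=
  ⟨fun hac => hab.1 (eq_of_mem_desSet_of_mem_desSet (by rw [hac]; exact hbc.2) hab.2),
    mem_desSet_trans hbc.2 hab.2⟩

theorem ancSet_subset (h : T.Anc w a) : T.ancSet w ⊆ T.ancSet a :=
  fun _ hz => Anc.trans hz h

theorem parent_eq_of_anc (hp : T.Anc b a) (h : ∀ w, T.Anc w a → w = b ∨ T.Anc w b) :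
    T.parent a = b := by
  have ha : a ≠ T.root := fun he => T.not_anc_root b (he ▸ hp)
  rcases (anc_iff_eq_parent_or_anc_parent ha).1 hp with he | hb
  · exact he.symm
  · rcases h _ (anc_parent ha) with he | hpb
    · exact he
    · exact absurd (Anc.trans hb hpb) (T.not_anc_self b)

theorem ext {T₁ T₂ : ElimTree G} (hroot : T₁.root = T₂.root) (hparent : T₁.parent = T₂.parent) :
    T₁ = T₂ := by
  cases T₁
  cases T₂
  subst hroot hparent
  rfl

theorem eq_of_anc_iff {T₁ T₂ : ElimTree G} (h : ∀ a b, T₁.Anc a b ↔ T₂.Anc a b) : T₁ = T₂ := by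
  have hroot : T₁.root = T₂.root :=
    eq_root_of_forall_not_anc fun w hw => T₁.not_anc_root w ((h w _).2 hw)
  refine ext hroot (funext fun a => ?_)
  by_cases ha : a = T₁.root
  · rw [ha, T₁.parent_root, hroot, T₂.parent_root]
  · refine (parent_eq_of_anc ((h _ a).1 (anc_parent ha)) fun w hw => ?_).symm
    exact ((anc_iff_eq_parent_or_anc_parent ha).1 ((h w a).2 hw)).imp_right (h _ _).1

variable {S : Set V} {z : V}

theorem reachIn_desSet (ha : a ∈ T.desSet w) (hb : b ∈ T.desSet w) :
    G.ReachIn (T.desSet w) a b :=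
  ⟨ha, hb, (T.connected_des w).preconnected ⟨a, ha⟩ ⟨b, hb⟩⟩

-- An edge leaving the subtree of `a` leads to an ancestor of `a`, by comparability.
theorem mem_desSet_of_reachIn (hS : ∀ x ∈ S, ¬ T.Anc x a) (h : G.ReachIn S a b) :
    b ∈ T.desSet a := by
  refine h.induction_on (T.mem_desSet_self a) fun x y _ hy hxy hx => ?_
  rcases T.adj_comparable x y hxy with hxy | hyx
  · rcases mem_desSet_total hx hxy with hay | hya
    · by_cases hya : y = a
      · exact hya ▸ T.mem_desSet_self a
      · exact absurd ⟨hya, hay⟩ (hS y hy)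
    · exact hya
  · exact mem_desSet_trans hyx hx

theorem reachIn_insert_parent (T : ElimTree G) (w : V) :
    G.ReachIn (insert (T.parent w) (T.desSet w)) (T.parent w) w := by
  set p := T.parent w
  have hwp : w ∈ T.desSet p := T.mem_desSet_parent w
  refine (reachIn_desSet (T.mem_desSet_self p) hwp).induction_on
    (P := fun x => x ∈ T.desSet w → G.ReachIn (insert p (T.desSet w)) p x)
    (fun _ => .refl (Set.mem_insert p _)) (fun x y hx _ hxy hPx hy => ?_) (T.mem_desSet_self w)
  by_cases hxw : x ∈ T.desSet w
  · exact (hPx hxw).step hxy (Set.mem_insert_of_mem p hy)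
  have hxp : x = p := by
    rcases T.adj_comparable x y hxy with hxy' | hyx
    · exact absurd (mem_desSet_trans hxy' hy) hxw
    · rcases mem_desSet_total hy hyx with hwx | hxw'
      · have hwx' : w ≠ x := fun he => hxw (he ▸ T.mem_desSet_self w)
        exact eq_of_mem_desSet_of_mem_desSet hx (parent_mem_desSet hwx hwx')
      · exact absurd hxw' hxw
  subst hxp
  exact (ReachIn.refl (Set.mem_insert _ _)).step hxy (Set.mem_insert_of_mem _ hy)

theorem reachIn_diff_ancSet_of_disjoint {T₁ T₂ : ElimTree G}
    (hdisj : ∀ x ∈ T₂.desSet z, ¬ T₁.Anc x z) (h : G.ReachIn (S \ T₂.ancSet z) z b) :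
    G.ReachIn (S \ T₁.ancSet z) z b :=
  h.restrict fun x hx =>
    ⟨hx.mem_right.1, hdisj x (mem_desSet_of_reachIn (fun _ hy => hy.2) hx)⟩

theorem desSet_subset_of_mem_desSet_parent {T₁ T₂ : ElimTree G} {c w : V}
    (h : ∀ x, x ≠ c → x ∈ T₁.desSet (T₂.parent x)) (hc : T₁.parent (T₂.parent c) = c)
    (hw : w ≠ T₂.parent c) : T₂.desSet w ⊆ T₁.desSet w := by
  rintro x ⟨n, hn⟩
  induction n generalizing x with
  | zero =>
    rw [Function.iterate_zero_apply] at hn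
    exact hn ▸ T₁.mem_desSet_self x
  | succ n ih =>
    have hp : T₂.parent x ∈ T₁.desSet w := ih (by rwa [Function.iterate_succ_apply] at hn)
    by_cases hxc : x = c
    · subst hxc
      exact hc ▸ parent_mem_desSet hp fun he => hw he.symm
    · exact mem_desSet_trans (h x hxc) hp

end ElimTree

section SameCompAfter

open ElimTree

variable {V : Type*} {G : SimpleGraph V} {T : ElimTree G} {u v w : V}

theorem sameCompAfter_iff_reachIn :
    SameCompAfter T u v w ↔ G.ReachIn (T.desSet u \ {v}) u w :=
  Iff.rfl

theorem SameCompAfter.mem_desSet (hs : SameCompAfter T u v w) : w ∈ T.desSet u :=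
  hs.2.1.1

theorem SameCompAfter.ne (hs : SameCompAfter T u v w) : w ≠ v :=
  hs.2.1.2

theorem sameCompAfter_of_parent_eq (huv : u ≠ v) (hvu : T.parent v = u) (hwu : w ≠ u)
    (hwv : w ≠ v) (hp : T.parent w = u) : SameCompAfter T u v w := by
  have hwu' : w ∈ T.desSet u := hp ▸ T.mem_desSet_parent w
  have hsub : insert u (T.desSet w) ⊆ T.desSet u \ {v} := by
    rintro x (rfl | hx)
    · exact ⟨T.mem_desSet_self x, huv⟩
    refine ⟨mem_desSet_trans hx hwu', ?_⟩
    rintro rfl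
    exact hwu (eq_of_mem_desSet_of_mem_desSet hwu' (hvu ▸ parent_mem_desSet hx (Ne.symm hwv)))
  exact (hp ▸ T.reachIn_insert_parent w).mono hsub

theorem SameCompAfter.parent (hvu : T.parent v = u) (hwu : w ≠ u) (hpu : T.parent w ≠ u)
    (hpv : T.parent w ≠ v) (hs : SameCompAfter T u v w) : SameCompAfter T u v (T.parent w) := by
  have hpu' : T.parent w ∈ T.desSet u := parent_mem_desSet hs.mem_desSet hwu
  have hsub : T.desSet (T.parent w) ⊆ T.desSet u \ {v} := by
    refine fun x hx => ⟨mem_desSet_trans hx hpu', ?_⟩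
    rintro rfl
    have hup : u ∈ T.desSet (T.parent w) := hvu ▸ parent_mem_desSet hx (Ne.symm hpv)
    exact hpu (eq_of_mem_desSet_of_mem_desSet hpu' hup)
  exact (sameCompAfter_iff_reachIn.1 hs).trans
    ((reachIn_desSet (T.mem_desSet_parent w) (T.mem_desSet_self _)).mono hsub)

end SameCompAfter

namespace ElimTree

variable {V : Type*} {G : SimpleGraph V}

/-- `T₂` has the strict ancestor relation of the swap of `u` with its child `v` in `T₁`:
`v` is above the whole old subtree of `u`, `u` is above its component in `T₁(u) - v`, and every
other vertex keeps its descendants. -/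
structure IsSwapAnc (T₁ T₂ : ElimTree G) (u v : V) : Prop where
  ne : u ≠ v
  parent_eq : T₁.parent v = u
  anc_left_iff : ∀ b, T₂.Anc u b ↔ u ≠ b ∧ SameCompAfter T₁ u v b
  anc_right_iff : ∀ b, T₂.Anc v b ↔ v ≠ b ∧ b ∈ T₁.desSet u
  anc_iff_of_ne : ∀ a b, a ≠ u → a ≠ v → (T₂.Anc a b ↔ T₁.Anc a b)

namespace IsSwapAnc

variable {T₁ T₂ : ElimTree G} {u v w z : V}

theorem right_mem_desSet_left (h : T₁.IsSwapAnc T₂ u v) : v ∈ T₁.desSet u :=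
  h.parent_eq ▸ T₁.mem_desSet_parent v

theorem anc_right_iff_eq_or_anc_left (h : T₁.IsSwapAnc T₂ u v) :
    T₁.Anc z v ↔ z = u ∨ T₁.Anc z u :=
  anc_iff_of_parent_eq h.parent_eq h.ne

theorem anc_right_left (h : T₁.IsSwapAnc T₂ u v) : T₂.Anc v u :=
  (h.anc_right_iff u).2 ⟨h.ne.symm, T₁.mem_desSet_self u⟩

theorem not_anc_left_right (h : T₁.IsSwapAnc T₂ u v) : ¬ T₂.Anc u v :=
  fun huv => ((h.anc_left_iff v).1 huv).2.ne rfl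

theorem parent_left_eq (h : T₁.IsSwapAnc T₂ u v) : T₂.parent u = v := by
  refine parent_eq_of_anc h.anc_right_left fun z hz => ?_
  by_cases hzu : z = u
  · exact absurd (hzu ▸ hz) (T₂.not_anc_self u)
  by_cases hzv : z = v
  · exact .inl hzv
  rw [h.anc_iff_of_ne z v hzu hzv, h.anc_right_iff_eq_or_anc_left]
  exact .inr (.inr ((h.anc_iff_of_ne z u hzu hzv).1 hz))

theorem root_eq_right (h : T₁.IsSwapAnc T₂ u v) (hu : u = T₁.root) : T₂.root = v := by
  refine (eq_root_of_forall_not_anc fun z hz => ?_).symm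
  by_cases hzu : z = u
  · exact h.not_anc_left_right (hzu ▸ hz)
  by_cases hzv : z = v
  · exact T₂.not_anc_self v (hzv ▸ hz)
  rcases h.anc_right_iff_eq_or_anc_left.1 ((h.anc_iff_of_ne z v hzu hzv).1 hz) with hzu' | hz'
  · exact hzu hzu'
  · exact T₁.not_anc_root z (hu ▸ hz')

theorem root_eq (h : T₁.IsSwapAnc T₂ u v) (hu : u ≠ T₁.root) : T₂.root = T₁.root := by
  refine (eq_root_of_forall_not_anc fun z hz => ?_).symm
  have hroot : T₁.root ∉ T₁.desSet u := fun hr => hu (eq_root_of_root_mem_desSet hr)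
  by_cases hzu : z = u
  · exact hroot ((h.anc_left_iff _).1 (hzu ▸ hz)).2.mem_desSet
  by_cases hzv : z = v
  · exact hroot ((h.anc_right_iff _).1 (hzv ▸ hz)).2
  exact T₁.not_anc_root z ((h.anc_iff_of_ne z _ hzu hzv).1 hz)

theorem parent_right_eq (h : T₁.IsSwapAnc T₂ u v) (hu : u ≠ T₁.root) :
    T₂.parent v = T₁.parent u := by
  have hpu : T₁.parent u ≠ u := parent_ne_self hu
  have hpv : T₁.parent u ≠ v := fun hpv => h.ne <| eq_of_mem_desSet_of_mem_desSet
    (hpv ▸ T₁.mem_desSet_parent u) h.right_mem_desSet_left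
  have hp : T₁.Anc (T₁.parent u) v := h.anc_right_iff_eq_or_anc_left.2 (.inr (anc_parent hu))
  refine parent_eq_of_anc ((h.anc_iff_of_ne _ v hpu hpv).2 hp) fun z hz => ?_
  by_cases hzu : z = u
  · exact absurd (hzu ▸ hz) h.not_anc_left_right
  by_cases hzv : z = v
  · exact absurd (hzv ▸ hz) (T₂.not_anc_self v)
  rw [h.anc_iff_of_ne z _ hzu hzv]
  rcases h.anc_right_iff_eq_or_anc_left.1 ((h.anc_iff_of_ne z v hzu hzv).1 hz) with hzu' | hz'
  · exact absurd hzu' hzu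
  · exact (anc_iff_eq_parent_or_anc_parent hu).1 hz'

theorem parent_of_sameCompAfter (h : T₁.IsSwapAnc T₂ u v) (hwu : w ≠ u) (hwv : w ≠ v)
    (hp : T₁.parent w = v) (hs : SameCompAfter T₁ u v w) : T₂.parent w = u := by
  have hw : w ≠ T₁.root := fun hw => hwv (by rw [← hp, hw, T₁.parent_root])
  refine parent_eq_of_anc ((h.anc_left_iff w).2 ⟨hwu.symm, hs⟩) fun z hz => ?_
  by_cases hzu : z = u
  · exact .inl hzu
  by_cases hzv : z = v
  · exact .inr (hzv ▸ h.anc_right_left)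
  right
  rw [h.anc_iff_of_ne z u hzu hzv]
  rcases (anc_iff_eq_parent_or_anc_parent hw).1 ((h.anc_iff_of_ne z w hzu hzv).1 hz) with hz' | hz'
  · exact absurd (hz'.trans hp) hzv
  · exact (h.anc_right_iff_eq_or_anc_left.1 (hp ▸ hz')).resolve_left hzu

theorem parent_eq_of_anc_parent (h : T₁.IsSwapAnc T₂ u v) (hw : w ≠ T₁.root)
    (hp : T₂.Anc (T₁.parent w) w)
    (hu : T₂.Anc u w → u = T₁.parent w ∨ T₂.Anc u (T₁.parent w))
    (hv : T₂.Anc v w → v = T₁.parent w ∨ T₂.Anc v (T₁.parent w)) :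
    T₂.parent w = T₁.parent w := by
  refine parent_eq_of_anc hp fun z hz => ?_
  by_cases hzu : z = u
  · exact hzu ▸ hu (hzu ▸ hz)
  by_cases hzv : z = v
  · exact hzv ▸ hv (hzv ▸ hz)
  rw [h.anc_iff_of_ne z _ hzu hzv]
  exact (anc_iff_eq_parent_or_anc_parent hw).1 ((h.anc_iff_of_ne z w hzu hzv).1 hz)

theorem parent_of_not_sameCompAfter (h : T₁.IsSwapAnc T₂ u v) (hwu : w ≠ u) (hwv : w ≠ v)
    (hnot : ¬ (T₁.parent w = v ∧ SameCompAfter T₁ u v w)) : T₂.parent w = T₁.parent w := by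
  by_cases hw : w = T₁.root
  · have hu : u ≠ T₁.root := hw ▸ hwu.symm
    rw [hw, T₁.parent_root, ← h.root_eq hu, T₂.parent_root]
  have hwp : w ∈ T₁.desSet (T₁.parent w) := T₁.mem_desSet_parent w
  by_cases hpv : T₁.parent w = v
  · have hwu' : w ∈ T₁.desSet u := mem_desSet_trans (hpv ▸ hwp) h.right_mem_desSet_left
    refine h.parent_eq_of_anc_parent hw (hpv ▸ (h.anc_right_iff w).2 ⟨hwv.symm, hwu'⟩)
      (fun huw => absurd ⟨hpv, ((h.anc_left_iff w).1 huw).2⟩ hnot) fun _ => .inl hpv.symm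
  by_cases hpu : T₁.parent w = u
  · have hs := sameCompAfter_of_parent_eq h.ne h.parent_eq hwu hwv hpu
    exact h.parent_eq_of_anc_parent hw (hpu ▸ (h.anc_left_iff w).2 ⟨hwu.symm, hs⟩)
      (fun _ => .inl hpu.symm) fun _ => .inr (hpu ▸ h.anc_right_left)
  refine h.parent_eq_of_anc_parent hw
    ((h.anc_iff_of_ne _ w hpu hpv).2 (anc_parent hw)) (fun huw => .inr ?_) fun hvw => .inr ?_
  · exact (h.anc_left_iff _).2 ⟨Ne.symm hpu,
      ((h.anc_left_iff w).1 huw).2.parent h.parent_eq hwu hpu hpv⟩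
  · exact (h.anc_right_iff _).2 ⟨Ne.symm hpv, parent_mem_desSet ((h.anc_right_iff w).1 hvw).2 hwu⟩

theorem swapRel (h : T₁.IsSwapAnc T₂ u v) : SwapRel T₁ T₂ u v := by
  refine ⟨h.ne, h.parent_eq, h.parent_left_eq, fun hu => ⟨h.root_eq_right hu, ?_⟩,
    fun hu => ⟨h.root_eq hu, h.parent_right_eq hu⟩, fun w hwu hwv =>
      ⟨fun ⟨hp, hs⟩ => h.parent_of_sameCompAfter hwu hwv hp hs,
        h.parent_of_not_sameCompAfter hwu hwv⟩⟩
  rw [← h.root_eq_right hu, T₂.parent_root]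

end IsSwapAnc

end ElimTree

namespace SwapRel

open ElimTree

variable {V : Type*} {G : SimpleGraph V} {T T' : ElimTree G} {S : Set V} {u v w x z b : V}

theorem ne (h : SwapRel T T' u v) : u ≠ v :=
  h.1

theorem parent_eq (h : SwapRel T T' u v) : T.parent v = u :=
  h.2.1

theorem parent_eq' (h : SwapRel T T' u v) : T'.parent u = v :=
  h.2.2.1

theorem mem_desSet_parent_of_ne_left (h : SwapRel T T' u v) (hx : x ≠ u) :
    x ∈ T.desSet (T'.parent x) := by
  obtain ⟨_, hvu, _, hroot, hnroot, hother⟩ := h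
  by_cases hxv : x = v
  · subst hxv
    by_cases hu : u = T.root
    · rw [(hroot hu).2]
      exact T.mem_desSet_self x
    · rw [(hnroot hu).2, ← hvu]
      exact ⟨2, rfl⟩
  by_cases hm : T.parent x = v ∧ SameCompAfter T u v x
  · rw [(hother x hx hxv).1 hm, ← hvu, ← hm.1]
    exact ⟨2, rfl⟩
  · rw [(hother x hx hxv).2 hm]
    exact T.mem_desSet_parent x

theorem mem_desSet_parent_of_ne_right (h : SwapRel T T' u v) (hx : x ≠ v) :
    x ∈ T'.desSet (T.parent x) := by
  obtain ⟨_, _, huv, hroot, hnroot, hother⟩ := h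
  by_cases hxu : x = u
  · subst hxu
    by_cases hu : x = T.root
    · rw [hu, T.parent_root]
      exact T'.mem_desSet_self _
    · rw [← (hnroot hu).2, ← huv]
      exact ⟨2, rfl⟩
  by_cases hm : T.parent x = v ∧ SameCompAfter T u v x
  · rw [hm.1, ← huv, ← (hother x hxu hx).1 hm]
    exact ⟨2, rfl⟩
  · rw [← (hother x hxu hx).2 hm]
    exact T'.mem_desSet_parent x

theorem desSet_subset_of_ne_right (h : SwapRel T T' u v) (hw : w ≠ v) :
    T'.desSet w ⊆ T.desSet w :=
  desSet_subset_of_mem_desSet_parent (fun _ => h.mem_desSet_parent_of_ne_left)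
    (by rw [h.parent_eq', h.parent_eq]) (by rwa [h.parent_eq'])

theorem desSet_subset_of_ne_left (h : SwapRel T T' u v) (hw : w ≠ u) :
    T.desSet w ⊆ T'.desSet w :=
  desSet_subset_of_mem_desSet_parent (fun _ => h.mem_desSet_parent_of_ne_right)
    (by rw [h.parent_eq, h.parent_eq']) (by rwa [h.parent_eq])

theorem ancSet_right' (h : SwapRel T T' u v) : T'.ancSet v = T.ancSet u := by
  ext w
  constructor
  · rintro ⟨hwv, hvw⟩
    refine ⟨fun hwu => h.ne ?_, h.parent_eq ▸
      parent_mem_desSet (h.desSet_subset_of_ne_right hwv hvw) (Ne.symm hwv)⟩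
    exact eq_of_mem_desSet_of_mem_desSet (h.parent_eq' ▸ T'.mem_desSet_parent u) (hwu ▸ hvw)
  · rintro ⟨hwu, huw⟩
    refine ⟨fun hwv => h.ne ?_, h.parent_eq' ▸
      parent_mem_desSet (h.desSet_subset_of_ne_left hwu huw) (Ne.symm hwu)⟩
    exact eq_of_mem_desSet_of_mem_desSet (hwv ▸ huw) (h.parent_eq ▸ T.mem_desSet_parent v)

theorem ancSet_left' (h : SwapRel T T' u v) : T'.ancSet u = insert v (T.ancSet u) := by
  rw [ancSet_eq_insert_of_parent_eq h.parent_eq' h.ne.symm, h.ancSet_right']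

theorem reachIn_diff_ancSet_iff (h : SwapRel T T' u v) (hzu : z ≠ u) (hzv : z ≠ v) :
    G.ReachIn (S \ T'.ancSet z) z b ↔ G.ReachIn (S \ T.ancSet z) z b := by
  constructor
  · refine reachIn_diff_ancSet_of_disjoint fun x hx hxz => ?_
    by_cases hxu : x = u
    · exact hzu (eq_of_mem_desSet_of_mem_desSet (hxu ▸ hxz.2)
        (h.desSet_subset_of_ne_right hzv (hxu ▸ hx)))
    · exact hxz.1 (eq_of_mem_desSet_of_mem_desSet hx (h.desSet_subset_of_ne_left hxu hxz.2))
  · refine reachIn_diff_ancSet_of_disjoint fun x hx hxz => ?_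
    by_cases hxv : x = v
    · exact hzv (eq_of_mem_desSet_of_mem_desSet (hxv ▸ hxz.2)
        (h.desSet_subset_of_ne_left hzu (hxv ▸ hx)))
    · exact hxz.1 (eq_of_mem_desSet_of_mem_desSet hx (h.desSet_subset_of_ne_right hxv hxz.2))

end SwapRel

namespace IsProjection

open ElimTree SimpleGraph

variable {V : Type*} {G : SimpleGraph V} {T T' : ElimTree G} {U : Set V}
  {TU TU' : ElimTree (G.induce U)} {u v : V}

theorem anc_iff (hTU : IsProjection T U TU) (a b : U) :
    TU.Anc a b ↔ (a : V) ≠ b ∧ G.ReachIn (U \ T.ancSet a) a b :=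
  (hTU a b).trans ⟨fun ⟨hab, hr⟩ => ⟨hab.1, hr⟩,
    fun ⟨hne, hr⟩ => ⟨⟨hne, mem_desSet_of_reachIn (fun _ hx => hx.2) hr⟩, hr⟩⟩

theorem mem_desSet_iff (hTU : IsProjection T U TU) (a b : U) :
    b ∈ TU.desSet a ↔ G.ReachIn (U \ T.ancSet a) a b := by
  rw [mem_desSet_iff_eq_or_anc, hTU.anc_iff]
  constructor
  · rintro (rfl | ⟨_, hr⟩)
    · exact .refl ⟨b.2, T.not_anc_self b⟩
    · exact hr
  · intro hr
    by_cases hba : b = a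
    · exact .inl hba
    · exact .inr ⟨fun he => hba (Subtype.ext he.symm), hr⟩

theorem sameCompAfter_iff (hTU : IsProjection T U TU) (a c b : U) :
    SameCompAfter TU a c b ↔ G.ReachIn ((U \ T.ancSet a) \ {(c : V)}) a b := by
  rw [sameCompAfter_iff_reachIn, reachIn_induce_iff]
  constructor
  · refine ReachIn.mono ?_
    rintro _ ⟨x, ⟨hx, hxc⟩, rfl⟩
    exact ⟨((hTU.mem_desSet_iff a x).1 hx).mem_right, fun he => hxc (Subtype.ext he)⟩
  · refine fun h => h.restrict fun x hx => ?_
    obtain ⟨⟨hxU, -⟩, hxc⟩ := hx.mem_right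
    exact ⟨⟨x, hxU⟩, ⟨(hTU.mem_desSet_iff a _).2 (hx.mono Set.sdiff_subset),
      fun he => hxc (congrArg Subtype.val he)⟩, rfl⟩

theorem anc_iff_of_swapRel (hswap : SwapRel T T' u v) (hTU : IsProjection T U TU)
    (hTU' : IsProjection T' U TU') {a : U} (hau : (a : V) ≠ u) (hav : (a : V) ≠ v) (b : U) :
    TU'.Anc a b ↔ TU.Anc a b := by
  rw [hTU'.anc_iff, hTU.anc_iff, hswap.reachIn_diff_ancSet_iff hau hav]

theorem anc_left_iff_of_swapRel (hswap : SwapRel T T' u v) (hTU' : IsProjection T' U TU')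
    (hu : u ∈ U) (b : U) :
    TU'.Anc ⟨u, hu⟩ b ↔ u ≠ b ∧ G.ReachIn ((U \ T.ancSet u) \ {v}) u b := by
  rw [hTU'.anc_iff, hswap.ancSet_left', Set.sdiff_sdiff, Set.union_singleton]

theorem anc_right_iff_of_swapRel (hswap : SwapRel T T' u v) (hTU' : IsProjection T' U TU')
    (hv : v ∈ U) (b : U) :
    TU'.Anc ⟨v, hv⟩ b ↔ v ≠ b ∧ G.ReachIn (U \ T.ancSet u) v b := by
  rw [hTU'.anc_iff, hswap.ancSet_right']

theorem anc_iff_of_parent_eq (hTU : IsProjection T U TU) (hvu : T.parent v = u) (huv : u ≠ v)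
    (hv : v ∈ U) (b : U) :
    TU.Anc ⟨v, hv⟩ b ↔ v ≠ b ∧ G.ReachIn ((U \ T.ancSet u) \ {u}) v b := by
  rw [hTU.anc_iff, ancSet_eq_insert_of_parent_eq hvu huv, Set.sdiff_sdiff, Set.union_singleton]

theorem eq_of_swapRel_of_not_reachIn (hswap : SwapRel T T' u v) (hTU : IsProjection T U TU)
    (hTU' : IsProjection T' U TU') (h : ¬ G.ReachIn (U \ T.ancSet u) u v) : TU' = TU := by
  refine eq_of_anc_iff fun ⟨a, ha⟩ b => ?_
  by_cases hau : a = u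
  · subst hau
    rw [anc_left_iff_of_swapRel hswap hTU', hTU.anc_iff]
    exact and_congr_right fun _ => ⟨(·.mono Set.sdiff_subset), (·.diff_singleton h)⟩
  by_cases hav : a = v
  · subst hav
    rw [anc_right_iff_of_swapRel hswap hTU', hTU.anc_iff_of_parent_eq hswap.parent_eq hswap.ne]
    exact and_congr_right fun _ =>
      ⟨(·.diff_singleton fun hau => h hau.symm), (·.mono Set.sdiff_subset)⟩
  exact anc_iff_of_swapRel hswap hTU hTU' hau hav b

theorem isSwapAnc_of_swapRel (hswap : SwapRel T T' u v) (hTU : IsProjection T U TU)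
    (hTU' : IsProjection T' U TU') (hu : u ∈ U) (hv : v ∈ U)
    (h : G.ReachIn (U \ T.ancSet u) u v) : TU.IsSwapAnc TU' ⟨u, hu⟩ ⟨v, hv⟩ where
  ne he := hswap.ne (congrArg Subtype.val he)
  parent_eq := by
    refine parent_eq_of_anc ((hTU.anc_iff _ _).2 ⟨hswap.ne, h⟩) fun w hw => ?_
    have hwv : (w : V) ∈ T.ancSet v := ((hTU w _).1 hw).1
    rw [ancSet_eq_insert_of_parent_eq hswap.parent_eq hswap.ne] at hwv
    rcases hwv with hwu | hwu
    · exact .inl (Subtype.ext hwu)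
    · refine .inr ((hTU.anc_iff _ _).2 ⟨hwu.1, ((hTU.anc_iff _ _).1 hw).2.trans ?_⟩)
      exact h.symm.mono (Set.sdiff_subset_sdiff_right (ancSet_subset hwu))
  anc_left_iff b := by
    rw [anc_left_iff_of_swapRel hswap hTU', hTU.sameCompAfter_iff]
    exact and_congr (Subtype.ext_iff (a1 := ⟨u, hu⟩)).not.symm Iff.rfl
  anc_right_iff b := by
    rw [anc_right_iff_of_swapRel hswap hTU', hTU.mem_desSet_iff]
    exact and_congr (Subtype.ext_iff (a1 := ⟨v, hv⟩)).not.symm ⟨h.trans, h.symm.trans⟩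
  anc_iff_of_ne a b hau hav :=
    anc_iff_of_swapRel hswap hTU hTU' (fun he => hau (Subtype.ext he))
      (fun he => hav (Subtype.ext he)) b

end IsProjection

theorem stmt_14_general {V : Type*} (G : SimpleGraph V)
    (T T' : ElimTree G) (u v : V) (hswap : SwapRel T T' u v)
    (U : Set V)
    (TU TU' : ElimTree (G.induce U))
    (hTU : IsProjection T U TU) (hTU' : IsProjection T' U TU') :
    (¬ (u ∈ U ∧ v ∈ U) → TU' = TU) ∧
    (∀ (hu : u ∈ U) (hv : v ∈ U),
      TU' = TU ∨ SwapRel TU TU' ⟨u, hu⟩ ⟨v, hv⟩) := by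
  refine ⟨fun huv => hTU.eq_of_swapRel_of_not_reachIn hswap hTU' fun h => huv
    ⟨Set.sdiff_subset h.mem_left, Set.sdiff_subset h.mem_right⟩, fun hu hv => ?_⟩
  by_cases h : G.ReachIn (U \ T.ancSet u) u v
  · exact .inr (hTU.isSwapAnc_of_swapRel hswap hTU' hu hv h).swapRel
  · exact .inl (hTU.eq_of_swapRel_of_not_reachIn hswap hTU' h)

theorem stmt_14 {V : Type*} (G : SimpleGraph V) (hG : G.Connected)
    (T T' : ElimTree G) (u v : V) (hswap : SwapRel T T' u v)
    (U : Set V) (hU : (G.induce U).Connected)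
    (TU TU' : ElimTree (G.induce U))
    (hTU : IsProjection T U TU) (hTU' : IsProjection T' U TU') :
    (¬ (u ∈ U ∧ v ∈ U) → TU' = TU) ∧
    (∀ (hu : u ∈ U) (hv : v ∈ U),
      TU' = TU ∨ SwapRel TU TU' ⟨u, hu⟩ ⟨v, hv⟩) :=
  stmt_14_general G T T' u v hswap U TU TU' hTU hTU'
end
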